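/- arXiv:1109.6077 — 7 statements merged into one kernel-verified Lean document; each statement's English description precedes it below -/
import Mathlib

section
/- For any state φ on a C*-algebra A, the set φ¹₊ = {a ∈ A : 0 ≤ a, ‖a‖ ≤ 1, φ(a) = 1} is norm centred: for any finite list a₁,…,aₙ of elements of φ¹₊, ‖a₁⋯aₙ‖ = 1. -/
/-!
A state `φ` satisfies `φ 1 = ‖φ‖ = 1`. For `a ∈ φ¹₊`, the element `b = 1 - a` satisfies
`0 ≤ b ≤ 1` and `φ b = 0`, so `0 ≤ φ (b * b) ≤ φ b = 0`, and the Cauchy–Schwarz inequality for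
the form `(x, y) ↦ φ (star x * y)` gives `φ (x * b) = 0`, i.e. `φ (x * a) = φ x` for every `x`.
Hence `φ (a₁ ⋯ aₙ) = 1`, which forces `‖a₁ ⋯ aₙ‖ ≥ 1`; the reverse inequality is
submultiplicativity of the norm.
-/

open scoped ComplexOrder

namespace PositiveLinearMap

variable {A : Type*} [CStarAlgebra A] [PartialOrder A] [StarOrderedRing A] (f : A →ₚ[ℂ] ℂ)

theorem norm_apply_star_mul_sq_le (x y : A) :
    ‖f (star x * y)‖ ^ 2 ≤ ‖f (star x * x)‖ * ‖f (star y * y)‖ := by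
  have hnorm (z : A) : ‖f (star z * z)‖ = ‖f.toPreGNS z‖ ^ 2 := by
    have h := f.preGNS_norm_sq (f.toPreGNS z)
    rw [ofPreGNS_toPreGNS] at h
    rw [← h, Complex.norm_pow, Complex.norm_real, norm_norm]
  rw [hnorm, hnorm, ← mul_pow]
  gcongr
  exact norm_inner_le_norm (𝕜 := ℂ) (f.toPreGNS x) (f.toPreGNS y)

theorem apply_mul_eq_zero_of_apply_star_mul_self_eq_zero {b : A} (hb : f (star b * b) = 0)
    (x : A) : f (x * b) = 0 := by
  have h := f.norm_apply_star_mul_sq_le (star x) b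
  rw [star_star, hb, norm_zero, mul_zero] at h
  exact norm_eq_zero.mp (pow_eq_zero_iff two_ne_zero |>.mp (le_antisymm h (by positivity)))

theorem norm_apply_le (x : A) : ‖f x‖ ≤ ‖f 1‖ * ‖x‖ := by
  have h := f.norm_apply_star_mul_sq_le 1 x
  rw [star_one, one_mul, mul_one] at h
  refine pow_le_pow_iff_left₀ (norm_nonneg _) (by positivity) two_ne_zero |>.mp ?_
  calc ‖f x‖ ^ 2 ≤ ‖f 1‖ * ‖f (star x * x)‖ := h
    _ ≤ ‖f 1‖ * (‖f 1‖ * ‖star x * x‖) := by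
      gcongr; exact f.norm_apply_le_of_nonneg _ (star_mul_self_nonneg x)
    _ = (‖f 1‖ * ‖x‖) ^ 2 := by rw [CStarRing.norm_star_mul_self]; ring

theorem apply_mul_eq_self_of_apply_eq_apply_one {a : A} (ha₀ : 0 ≤ a) (ha₁ : ‖a‖ ≤ 1)
    (ha : f a = f 1) (x : A) : f (x * a) = f x := by
  set b := 1 - a
  have hb₀ : 0 ≤ b := sub_nonneg.mpr ((CStarAlgebra.norm_le_one_iff_of_nonneg a).mp ha₁)
  have hb₁ : b ≤ 1 := sub_le_self 1 ha₀
  have hfb : f b = 0 := by rw [map_sub, ha, sub_self]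
  have hfbb : f (star b * b) = 0 := by
    refine le_antisymm ?_ (f.map_nonneg (star_mul_self_nonneg b))
    rw [(IsSelfAdjoint.of_nonneg hb₀).star_eq]
    calc f (b * b) = f (b ^ 2) := by rw [sq]
      _ ≤ f (b ^ 1) := OrderHomClass.mono f (CStarAlgebra.pow_antitone hb₀ hb₁ one_le_two)
      _ = 0 := by rw [pow_one, hfb]
  calc f (x * a) = f x - f (x * b) := by rw [← map_sub, mul_sub, mul_one, sub_sub_cancel]
    _ = f x := by rw [f.apply_mul_eq_zero_of_apply_star_mul_self_eq_zero hfbb, sub_zero]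

theorem apply_mul_list_prod (l : List A) (hl : ∀ a ∈ l, 0 ≤ a ∧ ‖a‖ ≤ 1 ∧ f a = f 1)
    (x : A) : f (x * l.prod) = f x := by
  induction l generalizing x with
  | nil => rw [List.prod_nil, mul_one]
  | cons a l ih =>
    obtain ⟨ha₀, ha₁, ha⟩ := hl a List.mem_cons_self
    rw [List.prod_cons, ← mul_assoc, ih (fun b hb => hl b (List.mem_cons_of_mem a hb)),
      f.apply_mul_eq_self_of_apply_eq_apply_one ha₀ ha₁ ha]

end PositiveLinearMap

theorem ContinuousLinearMap.opNorm_eq_norm_apply_one_of_nonneg {A : Type*} [CStarAlgebra A]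
    [PartialOrder A] [StarOrderedRing A] [Nontrivial A] {φ : A →L[ℂ] ℂ}
    (hφ : ∀ x, 0 ≤ x → 0 ≤ φ x) : ‖φ‖ = ‖φ 1‖ :=
  le_antisymm
    (φ.opNorm_le_bound (norm_nonneg _) (PositiveLinearMap.mk₀ φ.toLinearMap hφ).norm_apply_le)
    (by simpa using φ.le_opNorm 1)

/-- For any state `φ` on a C*-algebra `A`, the set
`φ¹₊ = {a : 0 ≤ a, ‖a‖ ≤ 1, φ a = 1}` is norm centred: every finite product of its
elements has norm `1`. -/
theorem stmt2 {A : Type*} [NormedRing A] [StarRing A] [CStarRing A]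
    [NormedAlgebra ℂ A] [CompleteSpace A] [StarModule ℂ A]
    [PartialOrder A] [StarOrderedRing A]
    (φ : A →L[ℂ] ℂ) (hφnorm : ‖φ‖ = 1) (hφpos : ∀ x : A, 0 ≤ x → 0 ≤ φ x)
    (l : List A) (hl : ∀ x ∈ l, 0 ≤ x ∧ ‖x‖ ≤ 1 ∧ φ x = 1) :
    ‖l.prod‖ = 1 := by
  let _ : CStarAlgebra A := {}
  have : Nontrivial A := by
    by_contra h
    rw [not_nontrivial_iff_subsingleton] at h
    simp [φ.opNorm_subsingleton] at hφnorm
  have hφ1 : φ 1 = 1 := by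
    rw [Complex.eq_coe_norm_of_nonneg (hφpos 1 zero_le_one),
      ← φ.opNorm_eq_norm_apply_one_of_nonneg hφpos, hφnorm, Complex.ofReal_one]
  have hφprod : φ l.prod = 1 := by
    have h := (PositiveLinearMap.mk₀ φ.toLinearMap hφpos).apply_mul_list_prod l
      (fun x hx => (hl x hx).imp_right (And.imp_right (·.trans hφ1.symm))) 1
    rw [one_mul] at h
    exact h.trans hφ1
  refine le_antisymm ?_ ?_
  · exact (Submonoid.mem_unitClosedBall A).mp <| Submonoid.list_prod_mem _ fun x hx =>
      (Submonoid.mem_unitClosedBall A).mpr (hl x hx).2.1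
  · calc 1 = ‖φ l.prod‖ := by rw [hφprod, norm_one]
      _ ≤ ‖φ‖ * ‖l.prod‖ := φ.le_opNorm _
      _ = ‖l.prod‖ := by rw [hφnorm, one_mul]
end

section
/- Let A be a C*-algebra, φ a state on A, and suppose a₁,…,aₙ ∈ A are positive elements of the unit ball with φ(aᵢ) = 1 for all i. Then for any positive b in the unit ball, φ(1−b) ≤ ‖a₁⋯aₙ(1−b)aₙ⋯a₁‖ (in the unitization of A if A is non-unital). -/
open scoped ComplexOrder

/-!
If `a ≤ 1` and `φ a = φ 1`, then `c = 1 - a` is positive with `φ c = 0`; writing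
`c = star s * s`, the Cauchy–Schwarz inequality for the GNS form `(x, y) ↦ φ (star x * y)` gives
`φ (c * y) = 0`, i.e. `φ (a * y) = φ y`, and by symmetry `φ (y * a) = φ y`. Peeling off the
`aᵢ` one at a time, `φ (a₁⋯aₙ (1 - b) aₙ⋯a₁) = φ (1 - b)`, which is nonnegative because
`b ≤ 1`, and a state has norm one.
-/

namespace PositiveLinearMap

section NonUnital

variable {A : Type*} [NonUnitalCStarAlgebra A] [PartialOrder A] [StarOrderedRing A]
  (f : A →ₚ[ℂ] ℂ)

lemma apply_star_mul_eq_zero_of_apply_star_mul_self_eq_zero {x : A}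
    (hx : f (star x * x) = 0) (y : A) : f (star x * y) = 0 := by
  have hnorm : ‖f.toPreGNS x‖ = 0 := by
    simpa [hx] using f.preGNS_norm_sq (f.toPreGNS x)
  have cs := norm_inner_le_norm (𝕜 := ℂ) (f.toPreGNS x) (f.toPreGNS y)
  rw [hnorm, zero_mul, norm_le_zero_iff] at cs
  exact cs

lemma apply_mul_eq_zero_of_nonneg {c : A} (hc : 0 ≤ c) (hfc : f c = 0) (y : A) :
    f (c * y) = 0 := by
  obtain ⟨s, rfl⟩ := CStarAlgebra.nonneg_iff_eq_star_mul_self.mp hc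
  rw [mul_assoc]
  exact f.apply_star_mul_eq_zero_of_apply_star_mul_self_eq_zero hfc _

end NonUnital

section Unital

variable {A : Type*} [CStarAlgebra A] [PartialOrder A] [StarOrderedRing A]
  (f : A →ₚ[ℂ] ℂ) {a : A}

lemma apply_mul_eq_of_le_one (ha : a ≤ 1) (hfa : f a = f 1) (y : A) : f (a * y) = f y := by
  have hc : f ((1 - a) * y) = 0 :=
    f.apply_mul_eq_zero_of_nonneg (sub_nonneg.mpr ha) (by rw [map_sub, hfa, sub_self]) y
  rwa [sub_mul, one_mul, map_sub, sub_eq_zero, eq_comm] at hc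

lemma apply_mul_eq_of_le_one_right (ha : a ≤ 1) (hfa : f a = f 1) (y : A) : f (y * a) = f y := by
  have hsa : IsSelfAdjoint a := by
    simpa using (IsSelfAdjoint.one A).sub (IsSelfAdjoint.of_nonneg (sub_nonneg.mpr ha))
  rw [← star_star (y * a), map_star, star_mul, hsa.star_eq, f.apply_mul_eq_of_le_one ha hfa,
    ← map_star, star_star]

lemma apply_mul_mul_eq_of_le_one (ha : a ≤ 1) (hfa : f a = f 1) (y : A) :
    f (a * y * a) = f y := by
  rw [f.apply_mul_eq_of_le_one_right ha hfa, f.apply_mul_eq_of_le_one ha hfa]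

lemma apply_prod_mul_mul_prod_reverse {l : List A} (hl : ∀ x ∈ l, x ≤ 1 ∧ f x = f 1) (y : A) :
    f (l.prod * y * l.reverse.prod) = f y := by
  induction l generalizing y with
  | nil => simp
  | cons a t ih =>
    obtain ⟨ha, hfa⟩ := hl a List.mem_cons_self
    have h := f.apply_mul_mul_eq_of_le_one ha hfa (t.prod * y * t.reverse.prod)
    rw [ih (fun x hx ↦ hl x (List.mem_cons_of_mem a hx))] at h
    simpa only [List.prod_cons, List.reverse_cons, List.prod_append, List.prod_nil, mul_one,
      mul_assoc] using h

end Unital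

section Ordered

variable {A : Type*} [Ring A] [PartialOrder A] [Module ℂ A] (f : A →ₚ[ℂ] ℂ) {a : A}

lemma apply_one_eq_one_of_le_one (h1 : ‖f 1‖ ≤ 1) (ha : a ≤ 1) (hfa : f a = 1) : f 1 = 1 := by
  have hge : 1 ≤ f 1 := hfa ▸ f.monotone' ha
  refine le_antisymm ?_ hge
  rw [Complex.eq_coe_norm_of_nonneg (zero_le_one.trans hge)]
  exact_mod_cast h1

end Ordered

end PositiveLinearMap

/-- If `φ` is a state on a unital C*-algebra `A`, `a₁, …, aₙ` are positive
elements of the unit ball with `φ aᵢ = 1`, and `b` is a positive element of the unit ball,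
then `φ (1 - b) ≤ ‖a₁⋯aₙ (1 - b) aₙ⋯a₁‖`. -/
theorem stmt3 {A : Type*} [NormedRing A] [StarRing A] [CStarRing A]
    [NormedAlgebra ℂ A] [CompleteSpace A] [StarModule ℂ A]
    [PartialOrder A] [StarOrderedRing A]
    (φ : A →L[ℂ] ℂ) (hφnorm : ‖φ‖ = 1) (hφpos : ∀ x : A, 0 ≤ x → 0 ≤ φ x)
    (l : List A) (hl : ∀ x ∈ l, 0 ≤ x ∧ ‖x‖ ≤ 1 ∧ φ x = 1)
    (b : A) (hb : 0 ≤ b) (hb1 : ‖b‖ ≤ 1) :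
    φ (1 - b) ≤ (‖l.prod * (1 - b) * l.reverse.prod‖ : ℂ) := by
  let _ : CStarAlgebra A := { }
  let f : A →ₚ[ℂ] ℂ := .mk₀ φ.toLinearMap hφpos
  have hφ_le : ∀ x, ‖φ x‖ ≤ ‖x‖ := fun x ↦ by simpa [hφnorm] using φ.le_opNorm x
  have hl' : ∀ x ∈ l, x ≤ 1 ∧ f x = f 1 := by
    intro x hx
    obtain ⟨hx0, hx1, hφx⟩ := hl x hx
    have hx_le : x ≤ 1 := (CStarAlgebra.norm_le_one_iff_of_nonneg x hx0).mp hx1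
    refine ⟨hx_le, ?_⟩
    obtain _ | _ := subsingleton_or_nontrivial A
    · rw [Subsingleton.elim x 1]
    · rw [f.apply_one_eq_one_of_le_one ((hφ_le 1).trans norm_one.le) hx_le hφx]
      exact hφx
  have hconj : φ (l.prod * (1 - b) * l.reverse.prod) = φ (1 - b) :=
    f.apply_prod_mul_mul_prod_reverse hl' (1 - b)
  have hpos : 0 ≤ φ (1 - b) :=
    hφpos _ (sub_nonneg.mpr ((CStarAlgebra.norm_le_one_iff_of_nonneg b hb).mp hb1))
  calc φ (1 - b) = ‖φ (1 - b)‖ := Complex.eq_coe_norm_of_nonneg hpos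
    _ = ‖φ (l.prod * (1 - b) * l.reverse.prod)‖ := by rw [hconj]
    _ ≤ ‖l.prod * (1 - b) * l.reverse.prod‖ := by exact_mod_cast hφ_le _
end

section
/- Let A be a C*-algebra, p a projection in A, and a a positive contraction in A with ‖p(1−a)‖ ≤ 2ε. Then ‖a − (p + p⊥ a p⊥)‖ ≤ 8ε, where p⊥ = 1 − p. -/
open scoped ComplexOrder

/-! Writing `q = 1 - p`, idempotency of `p` gives `a - (p + q a q) = -p(1 - a) - q(1 - a)p`.
Since `1 - a` and `p` are self-adjoint, `‖(1 - a)p‖ = ‖p(1 - a)‖`, and `‖q‖ ≤ 1`, so the left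
side has norm at most `2‖p(1 - a)‖ ≤ 4ε`. -/

theorem IsSelfAdjoint.norm_mul_comm {E : Type*} [NonUnitalNormedRing E] [StarRing E]
    [NormedStarGroup E] {x y : E} (hx : IsSelfAdjoint x) (hy : IsSelfAdjoint y) :
    ‖x * y‖ = ‖y * x‖ := by
  rw [← norm_star, star_mul, hx.star_eq, hy.star_eq]

theorem IsIdempotentElem.sub_add_compl_mul_mul_compl {R : Type*} [Ring R] {p : R}
    (hp : IsIdempotentElem p) (a : R) :
    a - (p + (1 - p) * a * (1 - p)) = -(p * (1 - a)) - (1 - p) * ((1 - a) * p) := by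
  have hpp : p * p = p := hp.eq
  simp only [mul_sub, sub_mul, mul_one, one_mul, hpp]
  noncomm_ring

theorem IsStarProjection.norm_sub_add_compl_mul_mul_compl_le {E : Type*} [NormedRing E]
    [StarRing E] [CStarRing E] {p a : E} (hp : IsStarProjection p) (ha : IsSelfAdjoint a) :
    ‖a - (p + (1 - p) * a * (1 - p))‖ ≤ 2 * ‖p * (1 - a)‖ := by
  have hflip : ‖(1 - a) * p‖ = ‖p * (1 - a)‖ :=
    ((IsSelfAdjoint.one E).sub ha).norm_mul_comm hp.isSelfAdjoint
  rw [hp.isIdempotentElem.sub_add_compl_mul_mul_compl a]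
  calc ‖-(p * (1 - a)) - (1 - p) * ((1 - a) * p)‖
      ≤ ‖p * (1 - a)‖ + ‖1 - p‖ * ‖(1 - a) * p‖ := by
        grw [norm_sub_le, norm_neg, norm_mul_le (1 - p)]
    _ ≤ ‖p * (1 - a)‖ + 1 * ‖p * (1 - a)‖ := by
        rw [hflip]; gcongr; exact hp.one_sub.norm_le
    _ = 2 * ‖p * (1 - a)‖ := by ring

theorem stmt6_general {A : Type*} [NormedRing A] [StarRing A] [CStarRing A]
    [PartialOrder A] [StarOrderedRing A]
    (p a : A) (hp : IsIdempotentElem p) (hps : IsSelfAdjoint p)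
    (ha : 0 ≤ a)
    (ε : ℝ) (h : ‖p * (1 - a)‖ ≤ 2 * ε) :
    ‖a - (p + (1 - p) * a * (1 - p))‖ ≤ 8 * ε := by
  have hε : 0 ≤ ε := by linarith [norm_nonneg (p * (1 - a))]
  calc ‖a - (p + (1 - p) * a * (1 - p))‖
      ≤ 2 * ‖p * (1 - a)‖ := (IsStarProjection.mk hp hps).norm_sub_add_compl_mul_mul_compl_le
        ha.isSelfAdjoint
    _ ≤ 8 * ε := by linarith

/-- If `p` is a projection in a unital C*-algebra `A`, `a` a positive
contraction with `‖p (1 - a)‖ ≤ 2ε`, then `‖a - (p + p⊥ a p⊥)‖ ≤ 8ε`, where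
`p⊥ = 1 - p`. -/
theorem stmt6 {A : Type*} [NormedRing A] [StarRing A] [CStarRing A]
    [NormedAlgebra ℂ A] [CompleteSpace A] [StarModule ℂ A]
    [PartialOrder A] [StarOrderedRing A]
    (p a : A) (hp : IsIdempotentElem p) (hps : IsSelfAdjoint p)
    (ha : 0 ≤ a) (ha1 : ‖a‖ ≤ 1)
    (ε : ℝ) (hε : 0 < ε) (h : ‖p * (1 - a)‖ ≤ 2 * ε) :
    ‖a - (p + (1 - p) * a * (1 - p))‖ ≤ 8 * ε :=
  stmt6_general p a hp hps ha ε h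
end

section
/- Let m, n ∈ ℕ, and let 𝒳 be a family of subsets of ℕ each of size at most m, such that every k ∈ ℕ belongs to at most n members of 𝒳. Then ℕ can be partitioned into at most n(m−1)+1 sets A₀,…,A_{n(m−1)} such that |Aⱼ ∩ X| ≤ 1 for every j and every X ∈ 𝒳. In particular, for every ultrafilter 𝒰 on ℕ there exists U ∈ 𝒰 with |U ∩ X| ≤ 1 for all X ∈ 𝒳. -/
/-!
Join two points of `ℕ` when some member of `X` contains both. A point lies in at most `n`
members of `X`, each containing at most `m - 1` further points, so every vertex of this graph
has degree at most `n(m - 1)`. Colouring `ℕ` greedily in increasing order therefore needs at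
most `n(m - 1) + 1` colours, and the colour classes form the partition. Finitely many sets
covering `ℕ` have one member in any ultrafilter.
-/

open Set

namespace SimpleGraph

variable {α : Type*}

def primalGraph (X : Set (Set α)) : SimpleGraph α where
  Adj a b := a ≠ b ∧ ∃ s ∈ X, a ∈ s ∧ b ∈ s
  symm := ⟨fun _ _ ⟨hab, s, hs, ha, hb⟩ => ⟨hab.symm, s, hs, hb, ha⟩⟩
  loopless := ⟨fun _ h => h.1 rfl⟩

theorem primalGraph_neighborSet_subset (X : Set (Set α)) (k : α) :
    (primalGraph X).neighborSet k ⊆ ⋃ s ∈ {s ∈ X | k ∈ s}, s \ {k} := by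
  rintro j ⟨hkj, s, hs, hk, hj⟩
  exact mem_biUnion ⟨hs, hk⟩ ⟨hj, hkj.symm⟩

theorem encard_primalGraph_neighborSet_le {X : Set (Set α)} {m n : ℕ}
    (hsize : ∀ s ∈ X, s.encard ≤ m) {k : α} (hdeg : {s ∈ X | k ∈ s}.encard ≤ n) :
    ((primalGraph X).neighborSet k).encard ≤ ↑(n * (m - 1)) := by
  set T := (finite_of_encard_le_coe hdeg).toFinset
  have hpunctured : ∀ s ∈ T, (s \ {k}).encard ≤ ↑(m - 1) := by
    intro s hsT
    obtain ⟨hs, hk⟩ : s ∈ X ∧ k ∈ s := by simpa [T] using hsT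
    rw [ENat.natCast_sub, Nat.cast_one]
    exact ENat.le_sub_of_add_le_right ENat.one_ne_top
      ((encard_sdiff_singleton_add_one hk).trans_le (hsize s hs))
  have hT : (T.card : ℕ∞) ≤ n := by
    rwa [← encard_coe_eq_coe_finsetCard, Finite.coe_toFinset]
  calc ((primalGraph X).neighborSet k).encard
      ≤ (⋃ s ∈ T, s \ {k}).encard :=
        encard_le_encard (by simpa [T] using primalGraph_neighborSet_subset X k)
    _ ≤ ∑ s ∈ T, (s \ {k}).encard := T.set_encard_biUnion_le _
    _ ≤ ∑ _s ∈ T, (↑(m - 1) : ℕ∞) := Finset.sum_le_sum hpunctured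
    _ = ↑(T.card * (m - 1)) := by simp
    _ ≤ ↑(n * (m - 1)) := by
      gcongr
      exact_mod_cast hT

theorem Coloring.inter_colorClass_subsingleton {X : Set (Set α)} {β : Type*}
    (C : (primalGraph X).Coloring β) (c : β) {s : Set α} (hs : s ∈ X) :
    (C.colorClass c ∩ s).Subsingleton := by
  rintro a ⟨ha, has⟩ b ⟨hb, hbs⟩
  by_contra hab
  exact C.valid ⟨hab, s, hs, has, hbs⟩ (ha.trans hb.symm)

theorem Coloring.exists_colorClass_mem {V β : Type*} [Finite β] {G : SimpleGraph V}
    (C : G.Coloring β) (U : Ultrafilter V) : ∃ c, C.colorClass c ∈ U :=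
  (Ultrafilter.eventually_exists_iff (P := fun c v => C v = c)).1
    (Filter.Eventually.of_forall fun v => ⟨C v, rfl⟩)

open Classical in
/-- Earlier vertices are indexed by `Fin k` so that the recursion is well founded. The fallback
colour `0` is never used when each vertex has at most `N` earlier neighbours. -/
noncomputable def greedyColor (G : SimpleGraph ℕ) (N : ℕ) (k : ℕ) : Fin (N + 1) :=
  if h : ∃ c, ∀ j : Fin k, G.Adj j k → G.greedyColor N j ≠ c then h.choose else 0

theorem greedyColor_ne_of_adj {G : SimpleGraph ℕ} {N : ℕ}
    (hG : ∀ k, (G.neighborSet k ∩ Iio k).encard ≤ N) {j k : ℕ} (hjk : j < k)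
    (hadj : G.Adj j k) : G.greedyColor N j ≠ G.greedyColor N k := by
  have hfree : ∃ c, ∀ i : Fin k, G.Adj i k → G.greedyColor N i ≠ c := by
    have hlt : (G.greedyColor N '' (G.neighborSet k ∩ Iio k)).encard
        < (univ : Set (Fin (N + 1))).encard :=
      calc _ ≤ (G.neighborSet k ∩ Iio k).encard := encard_image_le _ _
        _ ≤ N := hG k
        _ < _ := by simpa using ENat.natCast_lt_natCast.2 N.lt_succ_self
    obtain ⟨c, -, hc⟩ :=
      exists_of_ssubset ((subset_univ _).ssubset_of_ne fun h => hlt.ne (congrArg encard h))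
    exact ⟨c, fun i hadj hic => hc ⟨i, ⟨hadj.symm, i.isLt⟩, hic⟩⟩
  rw [greedyColor.eq_1 G N k, dif_pos hfree]
  exact hfree.choose_spec ⟨j, hjk⟩ hadj

theorem colorable_of_encard_neighborSet_inter_Iio_le {G : SimpleGraph ℕ} {N : ℕ}
    (hG : ∀ k, (G.neighborSet k ∩ Iio k).encard ≤ N) : G.Colorable (N + 1) := by
  refine ⟨Coloring.mk (G.greedyColor N) fun {j k} hadj => ?_⟩
  rcases lt_or_gt_of_ne hadj.ne with hjk | hkj
  · exact greedyColor_ne_of_adj hG hjk hadj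
  · exact (greedyColor_ne_of_adj hG hkj hadj.symm).symm

end SimpleGraph

/-- If every member of `X ⊆ 𝒫(ℕ)` has at most `m` elements and every
`k ∈ ℕ` lies in at most `n` members of `X`, then `ℕ` can be partitioned into
`n(m-1)+1` sets each meeting every member of `X` in at most one point; in particular
every ultrafilter on `ℕ` contains a set meeting every member of `X` in at most one
point. -/
theorem stmt9 (m n : ℕ) (X : Set (Set ℕ))
    (hsize : ∀ s ∈ X, s.Finite ∧ s.ncard ≤ m)
    (hdeg : ∀ k : ℕ, {s ∈ X | k ∈ s}.Finite ∧ {s ∈ X | k ∈ s}.ncard ≤ n) :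
    (∃ A : Fin (n * (m - 1) + 1) → Set ℕ,
        (∀ k : ℕ, ∃ j, k ∈ A j) ∧
        (∀ i j, i ≠ j → Disjoint (A i) (A j)) ∧
        (∀ j, ∀ s ∈ X, (A j ∩ s).Subsingleton)) ∧
      ∀ U : Ultrafilter ℕ, ∃ u ∈ U, ∀ s ∈ X, (u ∩ s).Subsingleton := by
  have hsize_encard : ∀ s ∈ X, s.encard ≤ m :=
    fun s hs => encard_le_coe_iff_finite_ncard_le.2 (hsize s hs)
  have hdeg_encard : ∀ k, {s ∈ X | k ∈ s}.encard ≤ n :=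
    fun k => encard_le_coe_iff_finite_ncard_le.2 (hdeg k)
  obtain ⟨C⟩ : (SimpleGraph.primalGraph X).Colorable (n * (m - 1) + 1) :=
    SimpleGraph.colorable_of_encard_neighborSet_inter_Iio_le fun k =>
      (encard_le_encard inter_subset_left).trans
        (SimpleGraph.encard_primalGraph_neighborSet_le hsize_encard (hdeg_encard k))
  refine ⟨⟨C.colorClass, fun k => ⟨C k, C.mem_colorClass k⟩, fun i j hij => ?_,
    fun j s hs => C.inter_colorClass_subsingleton j hs⟩, fun U => ?_⟩
  · exact disjoint_left.2 fun k hi hj => hij (hi.symm.trans hj)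
  · obtain ⟨j, hj⟩ := C.exists_colorClass_mem U
    exact ⟨C.colorClass j, hj, fun s hs => C.inter_colorClass_subsingleton j hs⟩
end

section
/- Let H be a separable Hilbert space with orthonormal basis (eₙ), T ∈ B(H), and g : ℕ → ℕ increasing with ‖P_{g(n)} T P_{ℕ∖g(n+1)}‖ ≤ 1/n² and ‖P_{ℕ∖g(n+1)} T P_{g(n)}‖ ≤ 1/n² for all n ≥ 1 (where P_X denotes the projection onto span{eₖ : k ∈ X} and g(n) is identified with {0,…,g(n)−1}). Then the operator Σₙ (P_{Gₙ} T P_{ℕ∖g(n+2)} + P_{ℕ∖g(n+2)} T P_{Gₙ}) is compact, where Gₙ = [g(n), g(n+1)). -/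
/-!
Since `Gₙ ⊆ [0, g(n+1))`, the `n`-th term equals
`P_{Gₙ} (P_{<g(n+1)} T P_{≥g(n+2)}) + (P_{≥g(n+2)} T P_{<g(n+1)}) P_{Gₙ}`.
As `Gₙ` is finite, `P_{Gₙ}` has finite rank, so every term is compact, and by the hypotheses
at `n + 1` its norm is at most `2 / (n+1)²`. The series therefore converges absolutely, and its
sum is compact because the compact operators form a closed subspace of `B(H)`.
-/

namespace HilbertBasis

variable {ι 𝕜 E : Type*} [RCLike 𝕜] [NormedAddCommGroup E] [InnerProductSpace 𝕜 E]

theorem ext_clm {F : Type*} [TopologicalSpace F] [AddCommMonoid F] [Module 𝕜 F] [T2Space F]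
    (b : HilbertBasis ι 𝕜 E) {f g : E →L[𝕜] F} (h : ∀ i, f (b i) = g (b i)) : f = g :=
  ContinuousLinearMap.ext_on (Submodule.dense_iff_topologicalClosure_eq_top.2 b.dense_span)
    (by rintro _ ⟨i, rfl⟩; exact h i)

theorem mem_orthogonal_span_image (b : HilbertBasis ι 𝕜 E) {X : Set ι} {i : ι} (hi : i ∉ X) :
    b i ∈ (Submodule.span 𝕜 (b '' X))ᗮ := by
  rw [Submodule.mem_orthogonal']
  intro u hu
  have hle : Submodule.span 𝕜 (b '' X) ≤ (𝕜 ∙ b i)ᗮ := by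
    rw [Submodule.span_le]
    rintro _ ⟨j, hj, rfl⟩
    exact (Submodule.mem_orthogonal_singleton_iff_inner_right).2
      (b.orthonormal.2 fun h => hi (h ▸ hj))
  exact Submodule.mem_orthogonal_singleton_iff_inner_right.1 (hle hu)

def IsCoordProjection (b : HilbertBasis ι 𝕜 E) (X : Set ι) (P : E →L[𝕜] E) : Prop :=
  ∀ i, (i ∈ X → P (b i) = b i) ∧ (i ∉ X → P (b i) = 0)

namespace IsCoordProjection

variable {b : HilbertBasis ι 𝕜 E} {X Y : Set ι} {P Q : E →L[𝕜] E}

theorem comp_eq_left_of_subset (hP : b.IsCoordProjection X P) (hQ : b.IsCoordProjection Y Q)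
    (hXY : X ⊆ Y) : P ∘L Q = P := by
  refine b.ext_clm fun i => ?_
  by_cases hi : i ∈ Y
  · simp [(hQ i).1 hi]
  · simp [(hQ i).2 hi, (hP i).2 (mt (@hXY i) hi)]

theorem comp_eq_right_of_subset (hP : b.IsCoordProjection X P) (hQ : b.IsCoordProjection Y Q)
    (hXY : X ⊆ Y) : Q ∘L P = P := by
  refine b.ext_clm fun i => ?_
  by_cases hi : i ∈ X
  · simp [(hP i).1 hi, (hQ i).1 (hXY hi)]
  · simp [(hP i).2 hi]

variable [CompleteSpace E]

theorem eq_starProjection (hP : b.IsCoordProjection X P) :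
    P = (Submodule.span 𝕜 (b '' X)).topologicalClosure.starProjection := by
  refine b.ext_clm fun i => ?_
  by_cases hi : i ∈ X
  · rw [(hP i).1 hi, eq_comm, Submodule.starProjection_eq_self_iff]
    exact Submodule.le_topologicalClosure _ (Submodule.subset_span ⟨i, hi, rfl⟩)
  · rw [(hP i).2 hi, eq_comm, Submodule.starProjection_apply_eq_zero_iff,
      Submodule.orthogonal_closure]
    exact b.mem_orthogonal_span_image hi

theorem norm_le_one (hP : b.IsCoordProjection X P) : ‖P‖ ≤ 1 :=
  hP.eq_starProjection ▸ Submodule.starProjection_norm_le _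

theorem isCompactOperator (hP : b.IsCoordProjection X P) (hX : X.Finite) :
    IsCompactOperator P := by
  set W := Submodule.span 𝕜 (b '' X)
  have hW : FiniteDimensional 𝕜 W := FiniteDimensional.span_of_finite 𝕜 (hX.image b)
  have : FiniteDimensional 𝕜 W.topologicalClosure := by
    rwa [W.closed_of_finiteDimensional.submodule_topologicalClosure_eq]
  rw [hP.eq_starProjection]
  exact (isCompactOperator_of_locallyCompactSpace_dom
    W.topologicalClosure.orthogonalProjectionOnto).clm_comp W.topologicalClosure.subtypeL

theorem norm_comp_add_comp_le (hP : b.IsCoordProjection X P) (hQ : b.IsCoordProjection Y Q)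
    (hXY : X ⊆ Y) (T R : E →L[𝕜] E) :
    ‖P ∘L T ∘L R + R ∘L T ∘L P‖ ≤ ‖Q ∘L T ∘L R‖ + ‖R ∘L T ∘L Q‖ := by
  have hleft : P ∘L T ∘L R = P ∘L Q ∘L T ∘L R := by
    rw [← ContinuousLinearMap.comp_assoc P Q, hP.comp_eq_left_of_subset hQ hXY]
  have hright : R ∘L T ∘L P = (R ∘L T ∘L Q) ∘L P := by
    simp only [ContinuousLinearMap.comp_assoc, hP.comp_eq_right_of_subset hQ hXY]
  rw [hleft, hright]
  have hP1 := hP.norm_le_one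
  exact (norm_add_le _ _).trans <| add_le_add
    ((ContinuousLinearMap.opNorm_comp_le _ _).trans (mul_le_of_le_one_left (norm_nonneg _) hP1))
    ((ContinuousLinearMap.opNorm_comp_le _ _).trans (mul_le_of_le_one_right (norm_nonneg _) hP1))

theorem isCompactOperator_comp_add_comp (hP : b.IsCoordProjection X P) (hX : X.Finite)
    (T R : E →L[𝕜] E) : IsCompactOperator (P ∘L T ∘L R + R ∘L T ∘L P) := by
  have hPc := hP.isCompactOperator hX
  rw [FunLike.coe_add, ContinuousLinearMap.coe_comp, ← ContinuousLinearMap.comp_assoc,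
    ContinuousLinearMap.coe_comp]
  exact (hPc.comp_clm (T ∘L R)).add (hPc.clm_comp (R ∘L T))

end IsCoordProjection

end HilbertBasis

theorem exists_hasSum_isCompactOperator_of_summable_norm {ι 𝕜 E F : Type*}
    [NontriviallyNormedField 𝕜] [NormedAddCommGroup E] [NormedSpace 𝕜 E] [NormedAddCommGroup F]
    [NormedSpace 𝕜 F] [CompleteSpace F] {f : ι → E →L[𝕜] F}
    (hc : ∀ i, IsCompactOperator (f i)) (hs : Summable fun i => ‖f i‖) :
    ∃ S, HasSum f S ∧ IsCompactOperator S :=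
  ⟨_, hs.of_norm.hasSum,
    tsum_mem (s := compactOperator (RingHom.id 𝕜) E F) isClosed_setOfPred_isCompactOperator hc⟩

theorem stmt12_general {H : Type*} [NormedAddCommGroup H] [InnerProductSpace ℂ H]
    [CompleteSpace H] (e : HilbertBasis ℕ ℂ H)
    (PX : Set ℕ → (H →L[ℂ] H))
    (hPX : ∀ (X : Set ℕ) (k : ℕ),
      (k ∈ X → PX X (e k) = e k) ∧ (k ∉ X → PX X (e k) = 0))
    (T : H →L[ℂ] H) (g : ℕ → ℕ)
    (h1 : ∀ n : ℕ, 1 ≤ n →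
      ‖PX (Set.Iio (g n)) ∘L T ∘L PX (Set.Ici (g (n + 1)))‖ ≤ 1 / (n : ℝ) ^ 2)
    (h2 : ∀ n : ℕ, 1 ≤ n →
      ‖PX (Set.Ici (g (n + 1))) ∘L T ∘L PX (Set.Iio (g n))‖ ≤ 1 / (n : ℝ) ^ 2) :
    ∃ S : H →L[ℂ] H,
      HasSum (fun n : ℕ =>
        PX (Set.Ico (g n) (g (n + 1))) ∘L T ∘L PX (Set.Ici (g (n + 2))) +
          PX (Set.Ici (g (n + 2))) ∘L T ∘L PX (Set.Ico (g n) (g (n + 1)))) S ∧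
      IsCompactOperator S := by
  have hP : ∀ X, e.IsCoordProjection X (PX X) := hPX
  refine exists_hasSum_isCompactOperator_of_summable_norm
    (fun n => (hP _).isCompactOperator_comp_add_comp (Set.finite_Ico _ _) T _) ?_
  have hsq : Summable fun n : ℕ => 1 / ((n + 1 : ℕ) : ℝ) ^ 2 :=
    (summable_nat_add_iff 1).2 (Real.summable_one_div_nat_pow.2 one_lt_two)
  refine (hsq.add hsq).of_nonneg_of_le (fun _ => norm_nonneg _) fun n => ?_
  have hsub : Set.Ico (g n) (g (n + 1)) ⊆ Set.Iio (g (n + 1)) := fun _ hk => hk.2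
  exact ((hP _).norm_comp_add_comp_le (hP _) hsub T _).trans
    (add_le_add (h1 (n + 1) le_add_self) (h2 (n + 1) le_add_self))

/-- Let `(eₙ)` be an orthonormal basis of a separable Hilbert space `H`,
`T ∈ B(H)`, and `g : ℕ → ℕ` strictly increasing with
`‖P_{g(n)} T P_{ℕ∖g(n+1)}‖ ≤ 1/n²` and `‖P_{ℕ∖g(n+1)} T P_{g(n)}‖ ≤ 1/n²` for `n ≥ 1`
(where `P_X` is the orthogonal projection onto `span{eₖ : k ∈ X}`, characterized by its
action on the basis).  Then `Σₙ (P_{Gₙ} T P_{ℕ∖g(n+2)} + P_{ℕ∖g(n+2)} T P_{Gₙ})`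
converges and is a compact operator, where `Gₙ = [g(n), g(n+1))`. -/
theorem stmt12 {H : Type*} [NormedAddCommGroup H] [InnerProductSpace ℂ H]
    [CompleteSpace H] (e : HilbertBasis ℕ ℂ H)
    (PX : Set ℕ → (H →L[ℂ] H))
    (hPX : ∀ (X : Set ℕ) (k : ℕ),
      (k ∈ X → PX X (e k) = e k) ∧ (k ∉ X → PX X (e k) = 0))
    (T : H →L[ℂ] H) (g : ℕ → ℕ) (hg : StrictMono g)
    (h1 : ∀ n : ℕ, 1 ≤ n →
      ‖PX (Set.Iio (g n)) ∘L T ∘L PX (Set.Ici (g (n + 1)))‖ ≤ 1 / (n : ℝ) ^ 2)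
    (h2 : ∀ n : ℕ, 1 ≤ n →
      ‖PX (Set.Ici (g (n + 1))) ∘L T ∘L PX (Set.Iio (g n))‖ ≤ 1 / (n : ℝ) ^ 2) :
    ∃ S : H →L[ℂ] H,
      HasSum (fun n : ℕ =>
        PX (Set.Ico (g n) (g (n + 1))) ∘L T ∘L PX (Set.Ici (g (n + 2))) +
          PX (Set.Ici (g (n + 2))) ∘L T ∘L PX (Set.Ico (g n) (g (n + 1)))) S ∧
      IsCompactOperator S :=
  stmt12_general e PX hPX T g h1 h2
end

section
/- For every ε > 0 and every nondecreasing sequence (rₙ) of nonnegative reals with r₀ = 0 and rₙ ↑ r ≤ 1, there exists a strictly increasing sequence (nₖ) with n₀ = 0 such that Σₖ √(r_{n_{k+1}} − r_{n_k}) < √r + ε. -/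
/-!
Since `rₙ ↑ R`, the tails `√(R - rₙ)` tend to `0`, so one can pick `n₁ < n₂ < ⋯` with
`√(R - r_{n_{k+1}}) < ε / 2 ^ (k + 2)`. The first increment is at most `√R`, and by monotonicity
the later ones satisfy `√(r_{n_{k+2}} - r_{n_{k+1}}) ≤ √(R - r_{n_{k+1}})`, so their sum is a
geometric series bounded by `ε / 2`.
-/

open Filter Topology

theorem Filter.extraction_zero_forall_of_eventually {P : ℕ → ℕ → Prop}
    (h : ∀ k, ∀ᶠ n in atTop, P k n) :
    ∃ φ : ℕ → ℕ, StrictMono φ ∧ φ 0 = 0 ∧ ∀ k, P k (φ (k + 1)) := by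
  obtain ⟨ψ, hψ, hP⟩ := extraction_forall_of_eventually fun k =>
    (h k).and (eventually_gt_atTop 0)
  refine ⟨fun k => Nat.casesOn k 0 ψ, strictMono_nat_of_lt_succ fun k => ?_, rfl,
    fun k => (hP k).1⟩
  cases k with
  | zero => exact (hP 0).2
  | succ k => exact hψ k.lt_succ_self

theorem summable_and_tsum_le_of_succ_le_geometric_two {a : ℕ → ℝ} {A δ : ℝ}
    (ha : ∀ k, 0 ≤ a k) (ha0 : a 0 ≤ A) (hsucc : ∀ k, a (k + 1) ≤ δ / 2 / 2 ^ k) :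
    Summable a ∧ ∑' k, a k ≤ A + δ := by
  have htail : Summable fun k => a (k + 1) :=
    (summable_geometric_two' δ).of_nonneg_of_le (fun k => ha _) hsucc
  have hsum : Summable a := (summable_nat_add_iff 1).1 htail
  refine ⟨hsum, ?_⟩
  calc ∑' k, a k = a 0 + ∑' k, a (k + 1) := hsum.tsum_eq_zero_add
    _ ≤ A + ∑' k : ℕ, δ / 2 / 2 ^ k :=
      add_le_add ha0 (htail.tsum_le_tsum hsucc (summable_geometric_two' δ))
    _ = A + δ := by rw [tsum_geometric_two']

theorem stmt13_general (r : ℕ → ℝ) (hmono : Monotone r) (h0 : r 0 = 0)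
    (R : ℝ)
    (hlim : Filter.Tendsto r Filter.atTop (nhds R))
    (ε : ℝ) (hε : 0 < ε) :
    ∃ nk : ℕ → ℕ, StrictMono nk ∧ nk 0 = 0 ∧
      Summable (fun k : ℕ => Real.sqrt (r (nk (k + 1)) - r (nk k))) ∧
      ∑' k : ℕ, Real.sqrt (r (nk (k + 1)) - r (nk k)) < Real.sqrt R + ε := by
  have hle : ∀ n, r n ≤ R := hmono.ge_of_tendsto hlim
  have htail : Tendsto (fun n => √(R - r n)) atTop (𝓝 0) := by
    simpa using (hlim.const_sub R).sqrt
  obtain ⟨nk, hnk, hnk0, hclose⟩ := extraction_zero_forall_of_eventually fun k =>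
    htail.eventually (gt_mem_nhds (by positivity : (0 : ℝ) < ε / 2 / 2 / 2 ^ k))
  obtain ⟨hsum, hbound⟩ := summable_and_tsum_le_of_succ_le_geometric_two
    (a := fun k => √(r (nk (k + 1)) - r (nk k))) (A := √R) (δ := ε / 2)
    (fun k => Real.sqrt_nonneg _)
    (by simpa [hnk0, h0] using Real.sqrt_le_sqrt (hle (nk 1)))
    (fun k => (Real.sqrt_le_sqrt (by linarith [hle (nk (k + 2))])).trans (hclose k).le)
  exact ⟨nk, hnk, hnk0, hsum, by linarith⟩

/-- For every `ε > 0` and every nondecreasing sequence `(rₙ)` of nonnegative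
reals with `r₀ = 0` converging to `r ≤ 1`, there is a strictly increasing sequence `(nₖ)`
with `n₀ = 0` such that `Σₖ √(r_{n_{k+1}} - r_{n_k}) < √r + ε`. -/
theorem stmt13 (r : ℕ → ℝ) (hmono : Monotone r) (h0 : r 0 = 0)
    (hnonneg : ∀ n, 0 ≤ r n) (R : ℝ)
    (hlim : Filter.Tendsto r Filter.atTop (nhds R)) (hR1 : R ≤ 1)
    (ε : ℝ) (hε : 0 < ε) :
    ∃ nk : ℕ → ℕ, StrictMono nk ∧ nk 0 = 0 ∧
      Summable (fun k : ℕ => Real.sqrt (r (nk (k + 1)) - r (nk k))) ∧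
      ∑' k : ℕ, Real.sqrt (r (nk (k + 1)) - r (nk k)) < Real.sqrt R + ε :=
  stmt13_general r hmono h0 R hlim ε hε
end

section
/- Let H be a separable Hilbert space with orthonormal basis (eₙ), let (Iₙ) be a partition of ℕ into finite sets with |Iₙ| → ∞, and let P be the projection onto the closed span of the unit vectors vₙ = |Iₙ|^{-1/2} Σ_{k∈Iₙ} eₖ. Then for any U ⊆ ℕ, ‖P_{Iₙ∖U} P‖² = |Iₙ∖U|/|Iₙ| for each n; hence if |U ∩ Iₙ|/|Iₙ| → 1 then ‖π(P_{ℕ∖U}) π(P)‖ = 0, i.e., π(P) ≤ π(P_U) in the Calkin algebra. -/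
/-! For any set `Y` of coordinates the vectors `P_Y vₙ` are pairwise orthogonal, since the blocks
`Iₙ` are disjoint; hence on the range of `P` the operator `P_Y` has norm at most
`supₙ ‖P_Y vₙ‖`, and `‖P_Y vₙ‖² = |Iₙ ∩ Y| / |Iₙ|`. For `Y = Iₙ \ U` all terms but the `n`-th
vanish, which gives the identity. For `Y = Uᶜ`, split off the coordinates lying in the first `N`
blocks: that piece is of finite rank, and the rest has norm at most
`sup_{m ≥ N} (|Iₘ \ U| / |Iₘ|)^{1/2}`, which tends to `0`. So `P_{Uᶜ} P` is a norm limit of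
compact operators. -/

open Classical Filter

open scoped InnerProductSpace

section Orthogonal

variable {𝕜 E F ι : Type*} [RCLike 𝕜] [NormedAddCommGroup E] [InnerProductSpace 𝕜 E]
  [NormedAddCommGroup F] [InnerProductSpace 𝕜 F]

theorem norm_sum_smul_sq_of_pairwise_inner_eq_zero {w : ι → F}
    (hw : Pairwise fun i j => ⟪w i, w j⟫_𝕜 = 0) (c : ι → 𝕜) (s : Finset ι) :
    ‖∑ i ∈ s, c i • w i‖ ^ 2 = ∑ i ∈ s, ‖c i‖ ^ 2 * ‖w i‖ ^ 2 := by
  induction s using Finset.induction_on with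
  | empty => simp
  | insert a s ha ih =>
    have horth : ⟪c a • w a, ∑ i ∈ s, c i • w i⟫_𝕜 = 0 := by
      rw [inner_sum]
      refine Finset.sum_eq_zero fun i hi => ?_
      rw [inner_smul_left, inner_smul_right, hw (ne_of_mem_of_not_mem hi ha).symm]
      ring
    rw [Finset.sum_insert ha, Finset.sum_insert ha, sq,
      norm_add_sq_eq_norm_sq_add_norm_sq_of_inner_eq_zero _ _ horth, ← sq, ← sq, ih, norm_smul,
      mul_pow]

theorem norm_apply_le_of_orthonormal {v : ι → E} (hv : Orthonormal 𝕜 v) (A : E →L[𝕜] F)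
    (hA : Pairwise fun i j => ⟪A (v i), A (v j)⟫_𝕜 = 0) {ε : ℝ} (hε : 0 ≤ ε)
    (hAv : ∀ i, ‖A (v i)‖ ≤ ε) {y : E}
    (hy : y ∈ (Submodule.span 𝕜 (Set.range v)).topologicalClosure) : ‖A y‖ ≤ ε * ‖y‖ := by
  have hclosed : IsClosed {y | ‖A y‖ ≤ ε * ‖y‖} := isClosed_le (by fun_prop) (by fun_prop)
  refine closure_minimal (fun y hy => ?_) hclosed hy
  obtain ⟨l, rfl⟩ := Finsupp.mem_span_range_iff_exists_finsupp.mp hy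
  have hv' : Pairwise fun i j => ⟪v i, v j⟫_𝕜 = 0 := fun i j hij => hv.inner_eq_zero hij
  rw [Set.mem_ofPred_eq, ← pow_le_pow_iff_left₀ (norm_nonneg _) (by positivity) two_ne_zero,
    Finsupp.sum, map_sum, mul_pow, norm_sum_smul_sq_of_pairwise_inner_eq_zero hv',
    Finset.mul_sum]
  simp only [map_smul]
  rw [norm_sum_smul_sq_of_pairwise_inner_eq_zero hA]
  refine Finset.sum_le_sum fun i _ => ?_
  rw [hv.norm_eq_one, one_pow, mul_one, mul_comm]
  gcongr
  exact hAv i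

theorem opNorm_comp_le_of_orthonormal {v : ι → E} (hv : Orthonormal 𝕜 v) (A : E →L[𝕜] F)
    (hA : Pairwise fun i j => ⟪A (v i), A (v j)⟫_𝕜 = 0) {ε : ℝ} (hε : 0 ≤ ε)
    (hAv : ∀ i, ‖A (v i)‖ ≤ ε) {P : E →L[𝕜] E} (hP : ‖P‖ ≤ 1)
    (hPrange : ∀ x, P x ∈ (Submodule.span 𝕜 (Set.range v)).topologicalClosure) :
    ‖A ∘L P‖ ≤ ε :=
  ContinuousLinearMap.opNorm_le_bound _ hε fun x =>
    calc ‖A (P x)‖ ≤ ε * ‖P x‖ := norm_apply_le_of_orthonormal hv A hA hε hAv (hPrange x)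
      _ ≤ ε * ‖x‖ := by gcongr; simpa using P.le_of_opNorm_le hP x

theorem opNorm_comp_eq_of_orthonormal {v : ι → E} (hv : Orthonormal 𝕜 v)
    (A : E →L[𝕜] F) {n : ι} (hA : ∀ m, m ≠ n → A (v m) = 0) {P : E →L[𝕜] E} (hP : ‖P‖ ≤ 1)
    (hPrange : ∀ x, P x ∈ (Submodule.span 𝕜 (Set.range v)).topologicalClosure)
    (hPn : P (v n) = v n) : ‖A ∘L P‖ = ‖A (v n)‖ := by
  refine le_antisymm (opNorm_comp_le_of_orthonormal hv A (fun i j hij => ?_) (norm_nonneg _)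
    (fun m => ?_) hP hPrange) ?_
  · rcases eq_or_ne i n with rfl | hin
    · simp [hA j (Ne.symm hij)]
    · simp [hA i hin]
  · rcases eq_or_ne m n with rfl | hmn
    · rfl
    · simp [hA m hmn]
  · simpa [hPn, hv.norm_eq_one] using (A ∘L P).le_opNorm (v n)

theorem Orthonormal.inner_sum_sum {e : ι → E} (he : Orthonormal 𝕜 e) (s t : Finset ι) :
    ⟪∑ i ∈ s, e i, ∑ j ∈ t, e j⟫_𝕜 = (s ∩ t).card := by
  simp [sum_inner, inner_sum, orthonormal_iff_ite.mp he, Finset.inter_comm]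

theorem Orthonormal.norm_sum_sq {e : ι → E} (he : Orthonormal 𝕜 e) (s : Finset ι) :
    ‖∑ i ∈ s, e i‖ ^ 2 = s.card := by
  have h := congrArg RCLike.re (he.inner_sum_sum s s)
  rwa [inner_self_eq_norm_sq, Finset.inter_self, RCLike.natCast_re] at h

end Orthogonal

section CoordinateProjection

variable {𝕜 E F ι : Type*} [RCLike 𝕜] [NormedAddCommGroup E] [InnerProductSpace 𝕜 E]
  [NormedAddCommGroup F] [NormedSpace 𝕜 F]

theorem HilbertBasis.apply_mem_of_forall_apply_mem (b : HilbertBasis ι 𝕜 E) (A : E →L[𝕜] F)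
    {V : Submodule 𝕜 F} (hV : IsClosed (V : Set F)) (h : ∀ i, A (b i) ∈ V) (x : E) :
    A x ∈ V := by
  have hle : (Submodule.span 𝕜 (Set.range b)).topologicalClosure ≤ V.comap (A : E →ₗ[𝕜] F) :=
    Submodule.topologicalClosure_minimal _
      (Submodule.span_le.mpr (by rintro _ ⟨i, rfl⟩; exact h i)) (hV.preimage A.continuous)
  rw [b.dense_span] at hle
  exact hle Submodule.mem_top

theorem HilbertBasis.continuousLinearMap_ext (b : HilbertBasis ι 𝕜 E) {A B : E →L[𝕜] F}
    (h : ∀ i, A (b i) = B (b i)) : A = B :=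
  ContinuousLinearMap.ext_on (Submodule.dense_iff_topologicalClosure_eq_top.mpr b.dense_span)
    (by rintro _ ⟨i, rfl⟩; exact h i)

theorem isCompactOperator_of_forall_mem_finiteDimensional {E F : Type*} [NormedAddCommGroup E]
    [NormedSpace 𝕜 E] [NormedAddCommGroup F] [NormedSpace 𝕜 F] (A : E →L[𝕜] F) (V : Submodule 𝕜 F)
    [FiniteDimensional 𝕜 V] (h : ∀ x, A x ∈ V) : IsCompactOperator A :=
  (isCompactOperator_of_locallyCompactSpace_dom (A.codRestrict V h)).continuous_comp
    continuous_subtype_val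

def IsCoordinateProjection (e : ι → E) (X : Set ι) (A : E →L[𝕜] E) : Prop :=
  ∀ k, (k ∈ X → A (e k) = e k) ∧ (k ∉ X → A (e k) = 0)

namespace IsCoordinateProjection

variable {e : ι → E} {X Y : Set ι} {A B : E →L[𝕜] E}

theorem id_univ : IsCoordinateProjection e Set.univ (ContinuousLinearMap.id 𝕜 E) :=
  fun k => ⟨fun _ => rfl, fun hk => absurd (Set.mem_univ k) hk⟩

theorem add (hA : IsCoordinateProjection e X A) (hB : IsCoordinateProjection e Y B)
    (hXY : Disjoint X Y) : IsCoordinateProjection e (X ∪ Y) (A + B) := by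
  intro k
  by_cases hX : k ∈ X <;> by_cases hY : k ∈ Y
  · exact absurd hY (Set.disjoint_left.mp hXY hX)
  all_goals simp [hX, hY, (hA k).1, (hA k).2, (hB k).1, (hB k).2]

theorem unique (b : HilbertBasis ι 𝕜 E) (hA : IsCoordinateProjection b X A)
    (hB : IsCoordinateProjection b X B) : A = B :=
  b.continuousLinearMap_ext fun k => by
    by_cases hk : k ∈ X
    · rw [(hA k).1 hk, (hB k).1 hk]
    · rw [(hA k).2 hk, (hB k).2 hk]

theorem isCompactOperator (b : HilbertBasis ι 𝕜 E) (hA : IsCoordinateProjection b X A)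
    (hX : X.Finite) : IsCompactOperator A := by
  have : FiniteDimensional 𝕜 (Submodule.span 𝕜 (b '' X)) :=
    FiniteDimensional.span_of_finite 𝕜 (hX.image b)
  refine isCompactOperator_of_forall_mem_finiteDimensional A _
    (b.apply_mem_of_forall_apply_mem A (Submodule.span 𝕜 (b '' X)).closed_of_finiteDimensional
      fun k => ?_)
  by_cases hk : k ∈ X
  · rw [(hA k).1 hk]
    exact Submodule.subset_span (Set.mem_image_of_mem b hk)
  · rw [(hA k).2 hk]
    exact Submodule.zero_mem _

theorem apply_sum (hA : IsCoordinateProjection e X A) (s : Finset ι) :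
    A (∑ k ∈ s, e k) = ∑ k ∈ s with k ∈ X, e k := by
  rw [map_sum, Finset.sum_filter]
  refine Finset.sum_congr rfl fun k _ => ?_
  split_ifs with hk
  exacts [(hA k).1 hk, (hA k).2 hk]

end IsCoordinateProjection

end CoordinateProjection

section BlockVectors

variable {𝕜 E ι : Type*} [RCLike 𝕜] [NormedAddCommGroup E] [InnerProductSpace 𝕜 E]

variable (𝕜) in
noncomputable def blockVec (e : ι → E) (s : Finset ι) : E :=
  ((Real.sqrt s.card : 𝕜))⁻¹ • ∑ k ∈ s, e k

namespace IsCoordinateProjection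

variable {e : ι → E} {X : Set ι} {A : E →L[𝕜] E}

theorem apply_blockVec (hA : IsCoordinateProjection e X A) (s : Finset ι) :
    A (blockVec 𝕜 e s) = ((Real.sqrt s.card : 𝕜))⁻¹ • ∑ k ∈ s with k ∈ X, e k := by
  rw [blockVec, map_smul, hA.apply_sum]

theorem apply_blockVec_eq_zero (hA : IsCoordinateProjection e X A) {s : Finset ι}
    (hs : ∀ k ∈ s, k ∉ X) : A (blockVec 𝕜 e s) = 0 := by
  rw [hA.apply_blockVec, Finset.filter_false_of_mem hs, Finset.sum_empty, smul_zero]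

theorem norm_sq_apply_blockVec (he : Orthonormal 𝕜 e) (hA : IsCoordinateProjection e X A)
    (s : Finset ι) : ‖A (blockVec 𝕜 e s)‖ ^ 2 = ((s.filter (· ∈ X)).card : ℝ) / s.card := by
  rw [hA.apply_blockVec, norm_smul, mul_pow, he.norm_sum_sq, norm_inv, RCLike.norm_ofReal,
    abs_of_nonneg (Real.sqrt_nonneg _), inv_pow, Real.sq_sqrt (Nat.cast_nonneg _), inv_mul_eq_div]

theorem inner_apply_blockVec_eq_zero (he : Orthonormal 𝕜 e) (hA : IsCoordinateProjection e X A)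
    {s t : Finset ι} (hst : Disjoint s t) : ⟪A (blockVec 𝕜 e s), A (blockVec 𝕜 e t)⟫_𝕜 = 0 := by
  rw [hA.apply_blockVec, hA.apply_blockVec, inner_smul_left, inner_smul_right, he.inner_sum_sum,
    Finset.disjoint_iff_inter_eq_empty.mp (hst.mono (Finset.filter_subset _ _)
      (Finset.filter_subset _ _))]
  simp

end IsCoordinateProjection

theorem Orthonormal.blockVec {e : ι → E} (he : Orthonormal 𝕜 e) {κ : Type*}
    {I : κ → Finset ι} (hne : ∀ n, (I n).Nonempty)
    (hdisj : Pairwise fun m n => Disjoint (I m) (I n)) :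
    Orthonormal 𝕜 fun n => _root_.blockVec 𝕜 e (I n) := by
  refine ⟨fun n => ?_, fun m n hmn =>
    IsCoordinateProjection.id_univ.inner_apply_blockVec_eq_zero he (hdisj hmn)⟩
  have h := IsCoordinateProjection.id_univ.norm_sq_apply_blockVec he (I n)
  simp only [ContinuousLinearMap.id_apply, Set.mem_univ, Finset.filter_true,
    div_self (Nat.cast_ne_zero.mpr (hne n).card_pos.ne' : ((I n).card : ℝ) ≠ 0)] at h
  exact (pow_eq_one_iff_of_nonneg (norm_nonneg _) two_ne_zero).mp h

end BlockVectors

theorem card_filter_not_div_card_eq_one_sub {α : Type*} {s : Finset α} (hs : s.Nonempty)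
    (p : α → Prop) [DecidablePred p] :
    ((s.filter fun a => ¬p a).card : ℝ) / s.card = 1 - (s.filter p).card / s.card := by
  rw [eq_sub_iff_add_eq, ← add_div, ← Nat.cast_add, add_comm,
    Finset.card_filter_add_card_filter_not, div_self (Nat.cast_ne_zero.mpr hs.card_pos.ne')]

theorem tendsto_coordinateProjection_inter_comp {𝕜 E ι : Type*} [RCLike 𝕜]
    [NormedAddCommGroup E] [InnerProductSpace 𝕜 E] (b : HilbertBasis ι 𝕜 E) {I : ℕ → Finset ι}
    (hv : Orthonormal 𝕜 fun n => blockVec 𝕜 b (I n))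
    (hdisj : Pairwise fun m n => Disjoint (I m) (I n)) {P : E →L[𝕜] E} (hP : ‖P‖ ≤ 1)
    (hPrange : ∀ x, P x ∈
      (Submodule.span 𝕜 (Set.range fun n => blockVec 𝕜 b (I n))).topologicalClosure)
    {PX : Set ι → E →L[𝕜] E} (hPX : ∀ X, IsCoordinateProjection b X (PX X)) {U : Set ι}
    (hU : Tendsto (fun n => (((I n).filter (· ∉ U)).card : ℝ) / (I n).card) atTop (nhds 0)) :
    Tendsto (fun N => PX (Uᶜ ∩ ↑((Finset.range N).biUnion I)) ∘L P) atTop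
      (nhds (PX Uᶜ ∘L P)) := by
  rw [Metric.tendsto_atTop]
  intro ε hε
  obtain ⟨N₀, hN₀⟩ := eventually_atTop.mp
    (hU.eventually (gt_mem_nhds (by positivity : (0 : ℝ) < (ε / 2) ^ 2)))
  refine ⟨N₀, fun N hN => ?_⟩
  set B : Set ι := ↑((Finset.range N).biUnion I)
  have hsplit : PX Uᶜ = PX (Uᶜ ∩ B) + PX (Uᶜ \ B) := by
    have h := (hPX (Uᶜ ∩ B)).add (hPX (Uᶜ \ B)) Set.disjoint_sdiff_inter.symm
    rw [Set.inter_union_sdiff] at h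
    exact (hPX Uᶜ).unique b h
  rw [dist_eq_norm', hsplit, ContinuousLinearMap.add_comp, add_sub_cancel_left]
  refine (opNorm_comp_le_of_orthonormal hv _ (fun m n hmn =>
    (hPX _).inner_apply_blockVec_eq_zero b.orthonormal (hdisj hmn)) (by positivity)
      (fun m => ?_) hP hPrange).trans_lt (half_lt_self hε)
  rcases lt_or_ge m N with hm | hm
  · rw [(hPX _).apply_blockVec_eq_zero fun k hk hkB => hkB.2 (Finset.mem_coe.mpr
      (Finset.mem_biUnion.mpr ⟨m, Finset.mem_range.mpr hm, hk⟩)), norm_zero]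
    positivity
  · refine (pow_le_pow_iff_left₀ (norm_nonneg _) (by positivity) two_ne_zero).mp ?_
    rw [(hPX _).norm_sq_apply_blockVec b.orthonormal]
    calc _ ≤ (((I m).filter (· ∉ U)).card : ℝ) / (I m).card := by
          gcongr
          exact fun hk => hk.1
      _ ≤ (ε / 2) ^ 2 := (hN₀ m (hN.trans hm)).le

theorem stmt16_general {H : Type*} [NormedAddCommGroup H] [InnerProductSpace ℂ H]
    [CompleteSpace H] (e : HilbertBasis ℕ ℂ H)
    (I : ℕ → Finset ℕ) (hne : ∀ n, (I n).Nonempty)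
    (hdisj : ∀ m n, m ≠ n → Disjoint (I m) (I n))
    (v : ℕ → H)
    (hv : ∀ n, v n = ((Real.sqrt (I n).card : ℂ))⁻¹ • ∑ k ∈ I n, e k)
    (P : H →L[ℂ] H) (hPi : IsIdempotentElem P) (hPs : IsSelfAdjoint P)
    (hPfix : ∀ n, P (v n) = v n)
    (hPrange : ∀ u : H, P u ∈ (Submodule.span ℂ (Set.range v)).topologicalClosure)
    (PX : Set ℕ → (H →L[ℂ] H))
    (hPX : ∀ (X : Set ℕ) (k : ℕ),
      (k ∈ X → PX X (e k) = e k) ∧ (k ∉ X → PX X (e k) = 0)) :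
    (∀ (n : ℕ) (U : Set ℕ),
        ‖PX ((↑(I n) : Set ℕ) \ U) ∘L P‖ ^ 2 =
          (((I n).filter (· ∉ U)).card : ℝ) / (I n).card) ∧
      ∀ U : Set ℕ,
        Tendsto (fun n => (((I n).filter (· ∈ U)).card : ℝ) / (I n).card)
          atTop (nhds 1) →
        IsCompactOperator ⇑(PX Uᶜ ∘L P) := by
  obtain rfl : v = fun n => blockVec ℂ e (I n) := funext hv
  have hPX' : ∀ X, IsCoordinateProjection e X (PX X) := hPX
  have horth := e.orthonormal.blockVec hne hdisj
  have hP : ‖P‖ ≤ 1 := IsStarProjection.norm_le P ⟨hPi, hPs⟩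
  refine ⟨fun n U => ?_, fun U hU => ?_⟩
  · have hS := hPX' (↑(I n) \ U)
    rw [opNorm_comp_eq_of_orthonormal horth _ (fun m hmn => hS.apply_blockVec_eq_zero
      fun k hk hkS => Finset.disjoint_left.mp (hdisj m n hmn) hk hkS.1) hP hPrange (hPfix n),
      hS.norm_sq_apply_blockVec e.orthonormal]
    congr 3
    ext k
    simp
  · have hU' : Tendsto (fun n => (((I n).filter (· ∉ U)).card : ℝ) / (I n).card) atTop
        (nhds 0) := by
      have h := hU.const_sub 1
      rw [sub_self] at h
      exact h.congr fun n => (card_filter_not_div_card_eq_one_sub (hne n) (· ∈ U)).symm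
    exact isCompactOperator_of_tendsto
      (tendsto_coordinateProjection_inter_comp e horth hdisj hP hPrange hPX' hU')
      (Eventually.of_forall fun N => ((hPX' _).isCompactOperator e
        ((Finset.finite_toSet _).inter_of_right _)).comp_clm P)

/-- Let `(Iₙ)` be a partition of `ℕ` into finite sets with `|Iₙ| → ∞`, let
`vₙ = |Iₙ|^{-1/2} Σ_{k ∈ Iₙ} eₖ` and let `P` be the projection onto the closed span of
the `vₙ`.  Then `‖P_{Iₙ∖U} P‖² = |Iₙ∖U|/|Iₙ|` for every `n` and `U ⊆ ℕ`; and if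
`|U ∩ Iₙ|/|Iₙ| → 1` then `P_{ℕ∖U} P` is compact, i.e. `π(P) ≤ π(P_U)` in the Calkin
algebra. -/
theorem stmt16 {H : Type*} [NormedAddCommGroup H] [InnerProductSpace ℂ H]
    [CompleteSpace H] (e : HilbertBasis ℕ ℂ H)
    (I : ℕ → Finset ℕ) (hne : ∀ n, (I n).Nonempty)
    (hdisj : ∀ m n, m ≠ n → Disjoint (I m) (I n))
    (hcover : ∀ k : ℕ, ∃ n, k ∈ I n)
    (hsize : Tendsto (fun n => ((I n).card : ℝ)) atTop atTop)
    (v : ℕ → H)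
    (hv : ∀ n, v n = ((Real.sqrt (I n).card : ℂ))⁻¹ • ∑ k ∈ I n, e k)
    (P : H →L[ℂ] H) (hPi : IsIdempotentElem P) (hPs : IsSelfAdjoint P)
    (hPfix : ∀ n, P (v n) = v n)
    (hPrange : ∀ u : H, P u ∈ (Submodule.span ℂ (Set.range v)).topologicalClosure)
    (PX : Set ℕ → (H →L[ℂ] H))
    (hPX : ∀ (X : Set ℕ) (k : ℕ),
      (k ∈ X → PX X (e k) = e k) ∧ (k ∉ X → PX X (e k) = 0)) :
    (∀ (n : ℕ) (U : Set ℕ),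
        ‖PX ((↑(I n) : Set ℕ) \ U) ∘L P‖ ^ 2 =
          (((I n).filter (· ∉ U)).card : ℝ) / (I n).card) ∧
      ∀ U : Set ℕ,
        Tendsto (fun n => (((I n).filter (· ∈ U)).card : ℝ) / (I n).card)
          atTop (nhds 1) →
        IsCompactOperator ⇑(PX Uᶜ ∘L P) :=
  stmt16_general e I hne hdisj v hv P hPi hPs hPfix hPrange PX hPX
end
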